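/- For every nonnegative integer L, the sum over all integers j of (-1)^j q^{j(3j+1)/2} [2L choose L-2j]_q equals the sum over n = 0 to L of q^{nL} [L choose n]_q. (Bressoud's bounded Euler identity; the q→1/q dual of the bounded Rogers–Ramanujan identity.) -/
import Mathlib


open Polynomial

noncomputable def qb : ℕ → ℕ → Polynomial ℤ
  | _, 0 => 1
  | 0, _ + 1 => 0
  | n + 1, m + 1 => qb n m + X ^ (m + 1) * qb n (m + 1)

/-- The Gaussian binomial coefficient with integer arguments, zero unless `0 ≤ m ≤ n`. -/
noncomputable def qbz (n m : ℤ) : Polynomial ℤ :=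
  if 0 ≤ m ∧ m ≤ n then qb n.toNat m.toNat else 0

/-- `B(L,M,a,b) = [L+M+a-b; L+a]_q [L+M-a+b; L-a]_q`. -/
noncomputable def Bp (L M a b : ℤ) : Polynomial ℤ :=
  qbz (L + M + a - b) (L + a) * qbz (L + M - a + b) (L - a)

lemma qb_zero_right (n : ℕ) : qb n 0 = 1 := by cases n <;> rfl

lemma qb_succ_succ (n m : ℕ) : qb (n+1) (m+1) = qb n m + X ^ (m + 1) * qb n (m + 1) := rfl

lemma qb_eq_zero : ∀ {n m : ℕ}, n < m → qb n m = 0 := by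
  intro n
  induction n with
  | zero => intro m h; match m, h with | m+1, _ => rfl
  | succ n ih =>
    intro m h
    match m, h with
    | m+1, h =>
      rw [qb_succ_succ, ih (by omega), ih (by omega), mul_zero, add_zero]

lemma qb_self (n : ℕ) : qb n n = 1 := by
  induction n with
  | zero => rfl
  | succ n ih => rw [qb_succ_succ, ih, qb_eq_zero (by omega), mul_zero, add_zero]

lemma qb_E : ∀ n m : ℕ, (1 - X^(m+1)) * qb n (m+1) = (1 - X^(n-m)) * qb n m := by
  intro n
  induction n with
  | zero =>
    intro m
    rw [qb_eq_zero (by omega), Nat.zero_sub, pow_zero, sub_self, zero_mul, mul_zero]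
  | succ n ih =>
    intro m
    match m with
    | 0 =>
      have h := ih 0
      simp only [Nat.sub_zero, zero_add, qb_zero_right, mul_one] at h ⊢
      rw [show qb (n+1) 1 = qb n 0 + X^1 * qb n 1 from rfl, qb_zero_right]
      linear_combination X * h
    | m+1 =>
      rcases le_or_gt (m+1) n with hm | hm
      · obtain ⟨k, rfl⟩ : ∃ k, n = m+1+k := ⟨n - (m+1), by omega⟩
        have h1 := ih (m+1)
        have h2 := ih m
        rw [show m+1+k - (m+1) = k from by omega] at h1
        rw [show m+1+k - m = k+1 from by omega] at h2
        rw [qb_succ_succ, qb_succ_succ, show m+1+k+1 - (m+1) = k+1 from by omega]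
        linear_combination (X:Polynomial ℤ)^(m+1+1) * h1 + h2
      · rw [qb_succ_succ, show n+1-(m+1) = 0 from by omega, pow_zero, sub_self, zero_mul,
          qb_eq_zero (show n < m+1 by omega), qb_eq_zero (show n < m+2 by omega)]
        ring

lemma qb_symm : ∀ n m : ℕ, m ≤ n → qb n (n - m) = qb n m := by
  intro n
  induction n with
  | zero => intro m h; interval_cases m; rfl
  | succ n ih =>
    intro m h
    match m with
    | 0 => rw [Nat.sub_zero, qb_self, qb_zero_right]
    | m+1 =>
      rcases eq_or_lt_of_le h with h' | h'
      · rw [← h', Nat.sub_self, qb_zero_right, qb_self]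
      · have hm : m + 1 ≤ n := by omega
        rw [show n+1 - (m+1) = (n - (m+1)) + 1 from by omega, qb_succ_succ,
          show n - (m+1) + 1 = n - m from by omega, ih (m+1) hm,
          ih m (by omega), qb_succ_succ]
        have hE := qb_E n m
        linear_combination hE

lemma qb_pascal2 (n m : ℕ) (h : m ≤ n) :
    qb (n+1) (m+1) = X^(n-m) * qb n m + qb n (m+1) := by
  rcases eq_or_lt_of_le h with h' | h'
  · subst h'
    rw [qb_self, Nat.sub_self, pow_zero, one_mul, qb_self, qb_eq_zero (by omega), add_zero]
  · have h2 : qb (n+1) (n - m) = qb (n+1) (m+1) := by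
      rw [show n - m = (n+1) - (m+1) from by omega]
      exact qb_symm (n+1) (m+1) (by omega)
    rw [← h2, show n - m = (n - (m+1)) + 1 from by omega, qb_succ_succ,
      show n - (m+1) + 1 = n - m from by omega,
      qb_symm n (m+1) h', qb_symm n m (by omega)]
    ring

lemma qbz_eq_zero {n m : ℤ} (h : m < 0 ∨ n < m) : qbz n m = 0 := by
  rw [qbz, if_neg]; omega

lemma qbz_in {n m : ℤ} (h0 : 0 ≤ m) (h1 : m ≤ n) : qbz n m = qb n.toNat m.toNat := by
  rw [qbz, if_pos ⟨h0, h1⟩]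

lemma qbz_zero_right {n : ℤ} (h : 0 ≤ n) : qbz n 0 = 1 := by
  rw [qbz_in le_rfl h, Int.toNat_zero, qb_zero_right]

lemma qbz_pascal1 {n : ℤ} (h : 1 ≤ n) (m : ℤ) :
    qbz n m = qbz (n-1) (m-1) + X ^ m.toNat * qbz (n-1) m := by
  rcases lt_or_ge m 0 with hm | hm
  · rw [qbz_eq_zero (Or.inl hm), qbz_eq_zero (Or.inl (by omega)),
      qbz_eq_zero (Or.inl hm), mul_zero, add_zero]
  rcases eq_or_lt_of_le hm with hm0 | hm1
  · rw [← hm0, qbz_zero_right (by omega), qbz_eq_zero (Or.inl (by omega)),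
      qbz_zero_right (by omega), Int.toNat_zero, pow_zero, one_mul, zero_add]
  rcases lt_or_ge n m with hnm | hnm
  · rw [qbz_eq_zero (Or.inr hnm), qbz_eq_zero (Or.inr (by omega)),
      qbz_eq_zero (Or.inr (by omega)), mul_zero, add_zero]
  · -- 1 ≤ m ≤ n
    have e1 : n.toNat = (n-1).toNat + 1 := by omega
    have e2 : m.toNat = (m-1).toNat + 1 := by omega
    have hq : qbz (n-1) m = qb (n-1).toNat ((m-1).toNat + 1) := by
      rcases eq_or_lt_of_le hnm with h' | h'
      · rw [qbz_eq_zero (Or.inr (by omega)), qb_eq_zero (by omega)]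
      · rw [qbz_in hm (by omega), e2]
    rw [qbz_in hm hnm, e1, e2, qb_succ_succ, qbz_in (by omega) (by omega), hq]

lemma qbz_pascal2 {n : ℤ} (h : 1 ≤ n) (m : ℤ) :
    qbz n m = X ^ (n-m).toNat * qbz (n-1) (m-1) + qbz (n-1) m := by
  rcases lt_or_ge m 0 with hm | hm
  · rw [qbz_eq_zero (Or.inl hm), qbz_eq_zero (Or.inl (by omega)),
      qbz_eq_zero (Or.inl hm), mul_zero, zero_add]
  rcases eq_or_lt_of_le hm with hm0 | hm1
  · rw [← hm0, qbz_zero_right (by omega), qbz_eq_zero (Or.inl (by omega)),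
      mul_zero, zero_add, qbz_zero_right (by omega)]
  rcases lt_or_ge n m with hnm | hnm
  · rw [qbz_eq_zero (Or.inr hnm), qbz_eq_zero (Or.inr (by omega)),
      qbz_eq_zero (Or.inr (by omega)), mul_zero, zero_add]
  · have e1 : n.toNat = (n-1).toNat + 1 := by omega
    have e2 : m.toNat = (m-1).toNat + 1 := by omega
    have hq : qbz (n-1) m = qb (n-1).toNat ((m-1).toNat + 1) := by
      rcases eq_or_lt_of_le hnm with h' | h'
      · rw [qbz_eq_zero (Or.inr (by omega)), qb_eq_zero (by omega)]
      · rw [qbz_in hm (by omega), e2]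
    rw [qbz_in hm hnm, e1, e2, qb_pascal2 _ _ (by omega), qbz_in (by omega) (by omega), hq,
      show (n-1).toNat - (m-1).toNat = (n-m).toNat from by omega]

lemma qbz_symm {n : ℤ} (hn : 0 ≤ n) (m : ℤ) : qbz n m = qbz n (n - m) := by
  rcases lt_or_ge m 0 with hm | hm
  · rw [qbz_eq_zero (Or.inl hm), qbz_eq_zero (Or.inr (by omega))]
  rcases lt_or_ge n m with hnm | hnm
  · rw [qbz_eq_zero (Or.inr hnm), qbz_eq_zero (Or.inl (by omega))]
  · rw [qbz_in hm hnm, qbz_in (by omega) (by omega),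
      show (n-m).toNat = n.toNat - m.toNat from by omega,
      qb_symm _ _ (by omega)]

lemma pent_dvd (j : ℤ) : (2:ℤ) ∣ j*(3*j+1) := by
  rcases Int.even_or_odd j with ⟨k,hk⟩|⟨k,hk⟩
  · exact ⟨k*(3*j+1), by rw [hk]; ring⟩
  · exact ⟨j*(3*k+2), by rw [hk]; ring⟩

lemma pent_two (j : ℤ) : 2 * (j*(3*j+1)/2) = j*(3*j+1) :=
  Int.mul_ediv_cancel' (pent_dvd j)

lemma pent_nonneg (j : ℤ) : 0 ≤ j*(3*j+1)/2 := by
  have h2 := pent_two j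
  rcases le_or_gt 0 j with h|h
  · have := mul_nonneg h (show (0:ℤ) ≤ 3*j+1 by omega); linarith
  · have := mul_pos_of_neg_of_neg h (show 3*j+1 < 0 by omega); linarith

lemma pent_reflect_one (j : ℤ) : (1-j)*(3*(1-j)+1)/2 = j*(3*j+1)/2 + 2 - 4*j := by
  have a := pent_two j
  have b := pent_two (1-j)
  nlinarith [a, b]

lemma pent_reflect_neg_one (j : ℤ) : (-1-j)*(3*(-1-j)+1)/2 = j*(3*j+1)/2 + 2*j + 1 := by
  have a := pent_two j
  have b := pent_two (-1-j)
  nlinarith [a, b]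

lemma toNat_add_eq {a b c d : ℤ} (ha : 0 ≤ a) (hb : 0 ≤ b) (hc : 0 ≤ c) (hd : 0 ≤ d)
    (h : a + b = c + d) : a.toNat + b.toNat = c.toNat + d.toNat := by omega

lemma sgn_flip (c : ℤ) (hc : Odd c) (j : ℤ) :
    ((-1 : Polynomial ℤ)) ^ (c - j).natAbs = -(-1) ^ j.natAbs := by
  rcases Int.even_or_odd j with h | h
  · rw [Odd.neg_one_pow (Int.natAbs_odd.mpr (hc.sub_even h)),
      Even.neg_one_pow (Int.natAbs_even.mpr h)]
  · rw [Even.neg_one_pow (Int.natAbs_even.mpr (hc.sub_odd h)),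
      Odd.neg_one_pow (Int.natAbs_odd.mpr h), neg_neg]

lemma sum_ext {g : ℤ → Polynomial ℤ} {S T : Finset ℤ}
    (hS : ∀ j ∈ S, j ∉ T → g j = 0) (hT : ∀ j ∈ T, j ∉ S → g j = 0) :
    ∑ j ∈ S, g j = ∑ j ∈ T, g j := by
  classical
  have h1 : ∑ j ∈ S, g j = ∑ j ∈ S ∩ T, g j :=
    (Finset.sum_subset Finset.inter_subset_left (fun x hx hnx => hS x hx
      (fun hT' => hnx (Finset.mem_inter.mpr ⟨hx, hT'⟩)))).symm
  have h2 : ∑ j ∈ T, g j = ∑ j ∈ T ∩ S, g j :=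
    (Finset.sum_subset Finset.inter_subset_left (fun x hx hnx => hT x hx
      (fun hS' => hnx (Finset.mem_inter.mpr ⟨hx, hS'⟩)))).symm
  rw [h1, h2, Finset.inter_comm]

lemma sum_reflect (g : ℤ → Polynomial ℤ) (a b c : ℤ) (h : a + b = c) :
    ∑ j ∈ Finset.Icc a b, g j = ∑ j ∈ Finset.Icc a b, g (c - j) := by
  apply Finset.sum_nbij' (i := fun j => c - j) (j := fun j => c - j)
  all_goals intro x hx
  all_goals simp only [Finset.mem_Icc] at *
  · omega
  · omega
  · omega
  · omega
  · rw [show c - (c - x) = x from by omega]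

lemma cancel_self {S : Polynomial ℤ} (h : S = -S) : S = 0 := by
  have h2 : (2 : Polynomial ℤ) * S = 0 := by linear_combination h
  rcases mul_eq_zero.mp h2 with h | h
  · exact absurd h two_ne_zero
  · exact h

noncomputable def trm (N b : ℤ) (j : ℤ) : Polynomial ℤ :=
  (-1) ^ j.natAbs * X ^ (j * (3 * j + 1) / 2).toNat * qbz N (b - 2 * j)

noncomputable def UU (L : ℕ) : Polynomial ℤ :=
  ∑ j ∈ Finset.Icc (-(L:ℤ)-1) ((L:ℤ)+1), trm (2*(L:ℤ)) (L:ℤ) j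
noncomputable def VV (L : ℕ) : Polynomial ℤ :=
  ∑ j ∈ Finset.Icc (-(L:ℤ)-1) ((L:ℤ)+1), trm (2*(L:ℤ)+1) (L:ℤ) j

lemma trm_eq_zero {N b : ℤ} {j : ℤ} (h : b - 2*j < 0 ∨ N < b - 2*j) : trm N b j = 0 := by
  rw [trm, qbz_eq_zero h, mul_zero]

lemma TT (L : ℕ) :
    ∑ j ∈ Finset.Icc (-(L:ℤ)-2) ((L:ℤ)+2),
      (-1)^j.natAbs * X^((j*(3*j+1)/2).toNat) *
        (X^(((L:ℤ)+1-2*j).toNat) * qbz (2*(L:ℤ)+1) ((L:ℤ)+1-2*j))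
    = X^(2*L+1) * UU L := by
  have hsplit : ∀ j : ℤ,
      (-1:Polynomial ℤ)^j.natAbs * X^((j*(3*j+1)/2).toNat) *
        (X^(((L:ℤ)+1-2*j).toNat) * qbz (2*(L:ℤ)+1) ((L:ℤ)+1-2*j))
      = (-1)^j.natAbs * X^((j*(3*j+1)/2).toNat) *
          (X^(((L:ℤ)+1-2*j).toNat) * (X^(((L:ℤ)+2*j).toNat) * qbz (2*(L:ℤ)) ((L:ℤ)-2*j)))
        + (-1)^j.natAbs * X^((j*(3*j+1)/2).toNat) *
          (X^(((L:ℤ)+1-2*j).toNat) * qbz (2*(L:ℤ)) ((L:ℤ)+1-2*j)) := by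
    intro j
    have hp := qbz_pascal2 (show (1:ℤ) ≤ 2*(L:ℤ)+1 by omega) ((L:ℤ)+1-2*j)
    rw [show (2*(L:ℤ)+1-((L:ℤ)+1-2*j)) = (L:ℤ)+2*j from by ring,
      show (2*(L:ℤ)+1-1) = 2*(L:ℤ) from by ring,
      show ((L:ℤ)+1-2*j-1) = (L:ℤ)-2*j from by ring] at hp
    rw [hp]
    ring
  rw [Finset.sum_congr rfl (fun j _ => hsplit j), Finset.sum_add_distrib]
  have hA : ∑ j ∈ Finset.Icc (-(L:ℤ)-2) ((L:ℤ)+2),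
      (-1:Polynomial ℤ)^j.natAbs * X^((j*(3*j+1)/2).toNat) *
        (X^(((L:ℤ)+1-2*j).toNat) * (X^(((L:ℤ)+2*j).toNat) * qbz (2*(L:ℤ)) ((L:ℤ)-2*j)))
      = X^(2*L+1) * UU L := by
    have hpt : ∀ j : ℤ,
        (-1:Polynomial ℤ)^j.natAbs * X^((j*(3*j+1)/2).toNat) *
          (X^(((L:ℤ)+1-2*j).toNat) * (X^(((L:ℤ)+2*j).toNat) * qbz (2*(L:ℤ)) ((L:ℤ)-2*j)))
        = X^(2*L+1) * trm (2*(L:ℤ)) (L:ℤ) j := by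
      intro j
      rcases le_or_gt 0 ((L:ℤ)-2*j) with h0 | h0
      · rcases le_or_gt ((L:ℤ)-2*j) (2*(L:ℤ)) with h1 | h1
        · have he : (((L:ℤ)+1-2*j).toNat) + (((L:ℤ)+2*j).toNat) = 2*L+1 := by omega
          rw [trm, ← he, pow_add]
          ring
        · rw [trm, qbz_eq_zero (Or.inr h1)]
          ring
      · rw [trm, qbz_eq_zero (Or.inl h0)]
        ring
    rw [Finset.sum_congr rfl (fun j _ => hpt j), ← Finset.mul_sum]
    congr 1
    rw [UU]
    apply sum_ext
    · intro j hj hj'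
      simp only [Finset.mem_Icc] at hj hj'
      exact trm_eq_zero (by omega)
    · intro j hj hj'
      simp only [Finset.mem_Icc] at hj hj'
      exact trm_eq_zero (by omega)
  have hB : ∑ j ∈ Finset.Icc (-(L:ℤ)-2) ((L:ℤ)+2),
      (-1:Polynomial ℤ)^j.natAbs * X^((j*(3*j+1)/2).toNat) *
        (X^(((L:ℤ)+1-2*j).toNat) * qbz (2*(L:ℤ)) ((L:ℤ)+1-2*j))
      = 0 := by
    set g : ℤ → Polynomial ℤ := fun j =>
      (-1:Polynomial ℤ)^j.natAbs * X^((j*(3*j+1)/2).toNat) *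
        (X^(((L:ℤ)+1-2*j).toNat) * qbz (2*(L:ℤ)) ((L:ℤ)+1-2*j)) with hg
    have hzero : ∀ j : ℤ, ((L:ℤ)+1-2*j < 0 ∨ 2*(L:ℤ) < (L:ℤ)+1-2*j) → g j = 0 := by
      intro j h
      rw [hg]
      simp only
      rw [qbz_eq_zero h, mul_zero, mul_zero]
    have hshrink : ∑ j ∈ Finset.Icc (-(L:ℤ)-2) ((L:ℤ)+2), g j
        = ∑ j ∈ Finset.Icc (-(L:ℤ)) ((L:ℤ)+1), g j := by
      apply sum_ext
      · intro j hj hj'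
        simp only [Finset.mem_Icc] at hj hj'
        exact hzero j (by omega)
      · intro j hj hj'
        simp only [Finset.mem_Icc] at hj hj'
        exact hzero j (by omega)
    have hflip : ∀ j : ℤ, g (1 - j) = - g j := by
      intro j
      rw [hg]
      simp only
      rw [sgn_flip 1 (by decide) j]
      rcases le_or_gt 0 ((L:ℤ)+1-2*j) with h0 | h0
      · rcases le_or_gt ((L:ℤ)+1-2*j) (2*(L:ℤ)) with h1 | h1
        · have hsym : qbz (2*(L:ℤ)) ((L:ℤ)+1-2*(1-j)) = qbz (2*(L:ℤ)) ((L:ℤ)+1-2*j) := by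
            rw [qbz_symm (by omega) ((L:ℤ)+1-2*(1-j)),
              show (2*(L:ℤ) - ((L:ℤ)+1-2*(1-j))) = (L:ℤ)+1-2*j from by ring]
          rw [hsym]
          have he : (((1-j) * (3*(1-j)+1)/2).toNat) + (((L:ℤ)+1-2*(1-j)).toNat)
              = ((j*(3*j+1)/2).toNat) + (((L:ℤ)+1-2*j).toNat) := by
            apply toNat_add_eq (pent_nonneg _) (by omega) (pent_nonneg _) h0
            rw [pent_reflect_one]
            ring
          calc -(-1:Polynomial ℤ)^j.natAbs * X^(((1-j)*(3*(1-j)+1)/2).toNat) *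
                (X^(((L:ℤ)+1-2*(1-j)).toNat) * qbz (2*(L:ℤ)) ((L:ℤ)+1-2*j))
              = -((-1)^j.natAbs * (X^((((1-j)*(3*(1-j)+1)/2).toNat) + (((L:ℤ)+1-2*(1-j)).toNat)) * qbz (2*(L:ℤ)) ((L:ℤ)+1-2*j))) := by
                rw [pow_add]; ring
            _ = -((-1)^j.natAbs * (X^(((j*(3*j+1)/2).toNat) + (((L:ℤ)+1-2*j).toNat)) * qbz (2*(L:ℤ)) ((L:ℤ)+1-2*j))) := by rw [he]
            _ = -((-1)^j.natAbs * X^((j*(3*j+1)/2).toNat) * (X^(((L:ℤ)+1-2*j).toNat) * qbz (2*(L:ℤ)) ((L:ℤ)+1-2*j))) := by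
                rw [pow_add]; ring
        · rw [qbz_eq_zero (show ((L:ℤ)+1-2*(1-j) < 0 ∨ 2*(L:ℤ) < (L:ℤ)+1-2*(1-j)) from by omega),
            qbz_eq_zero (Or.inr h1)]
          ring
      · rw [qbz_eq_zero (show ((L:ℤ)+1-2*(1-j) < 0 ∨ 2*(L:ℤ) < (L:ℤ)+1-2*(1-j)) from by omega),
          qbz_eq_zero (Or.inl h0)]
        ring
    rw [hshrink]
    apply cancel_self
    calc ∑ j ∈ Finset.Icc (-(L:ℤ)) ((L:ℤ)+1), g j
        = ∑ j ∈ Finset.Icc (-(L:ℤ)) ((L:ℤ)+1), g (1 - j) :=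
          sum_reflect g (-(L:ℤ)) ((L:ℤ)+1) 1 (by ring)
      _ = ∑ j ∈ Finset.Icc (-(L:ℤ)) ((L:ℤ)+1), -(g j) :=
          Finset.sum_congr rfl (fun j _ => hflip j)
      _ = - ∑ j ∈ Finset.Icc (-(L:ℤ)) ((L:ℤ)+1), g j := by
          rw [Finset.sum_neg_distrib]
  rw [hA, hB, add_zero]

lemma AA (L : ℕ) : UU (L+1) = X^(2*L+1) * UU L + VV L := by
  have hrange1 : (-((L+1:ℕ):ℤ)-1) = -(L:ℤ)-2 := by push_cast; ring
  have hrange2 : (((L+1:ℕ):ℤ)+1) = (L:ℤ)+2 := by push_cast; ring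
  have hcast : (2*((L+1:ℕ):ℤ)) = 2*(L:ℤ)+2 := by push_cast; ring
  have hsplit : ∀ j : ℤ, trm (2*((L+1:ℕ):ℤ)) ((L+1:ℕ):ℤ) j
      = (-1)^j.natAbs * X^((j*(3*j+1)/2).toNat) * qbz (2*(L:ℤ)+1) ((L:ℤ)-2*j)
        + (-1)^j.natAbs * X^((j*(3*j+1)/2).toNat) *
            (X^(((L:ℤ)+1-2*j).toNat) * qbz (2*(L:ℤ)+1) ((L:ℤ)+1-2*j)) := by
    intro j
    rw [trm, hcast, show (((L+1:ℕ):ℤ) - 2*j) = (L:ℤ)+1-2*j from by push_cast; ring]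
    have hp := qbz_pascal1 (show (1:ℤ) ≤ 2*(L:ℤ)+2 by omega) ((L:ℤ)+1-2*j)
    rw [show (2*(L:ℤ)+2-1) = 2*(L:ℤ)+1 from by ring,
      show ((L:ℤ)+1-2*j-1) = (L:ℤ)-2*j from by ring] at hp
    rw [hp]
    ring
  rw [UU, hrange1, hrange2, Finset.sum_congr rfl (fun j _ => hsplit j),
    Finset.sum_add_distrib]
  have hV : ∑ j ∈ Finset.Icc (-(L:ℤ)-2) ((L:ℤ)+2),
      (-1:Polynomial ℤ)^j.natAbs * X^((j*(3*j+1)/2).toNat) * qbz (2*(L:ℤ)+1) ((L:ℤ)-2*j)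
      = VV L := by
    rw [VV]
    apply sum_ext
    · intro j hj hj'
      simp only [Finset.mem_Icc] at hj hj'
      rw [qbz_eq_zero (show ((L:ℤ)-2*j < 0 ∨ 2*(L:ℤ)+1 < (L:ℤ)-2*j) from by omega), mul_zero]
    · intro j hj hj'
      simp only [Finset.mem_Icc] at hj hj'
      rw [qbz_eq_zero (show ((L:ℤ)-2*j < 0 ∨ 2*(L:ℤ)+1 < (L:ℤ)-2*j) from by omega), mul_zero]
  have hVt : ∑ j ∈ Finset.Icc (-(L:ℤ)-2) ((L:ℤ)+2),
      (-1:Polynomial ℤ)^j.natAbs * X^((j*(3*j+1)/2).toNat) * qbz (2*(L:ℤ)+1) ((L:ℤ)-2*j)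
      = ∑ j ∈ Finset.Icc (-(L:ℤ)-2) ((L:ℤ)+2), trm (2*(L:ℤ)+1) (L:ℤ) j :=
    Finset.sum_congr rfl (fun j _ => by rw [trm])
  rw [hVt] at hV
  rw [show (∑ j ∈ Finset.Icc (-(L:ℤ)-2) ((L:ℤ)+2),
      (-1:Polynomial ℤ)^j.natAbs * X^((j*(3*j+1)/2).toNat) * qbz (2*(L:ℤ)+1) ((L:ℤ)-2*j))
    = ∑ j ∈ Finset.Icc (-(L:ℤ)-2) ((L:ℤ)+2), trm (2*(L:ℤ)+1) (L:ℤ) j from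
      Finset.sum_congr rfl (fun j _ => by rw [trm]), hV, TT L]
  ring

lemma WW (L : ℕ) :
    ∑ j ∈ Finset.Icc (-(L:ℤ)-2) ((L:ℤ)+1),
      (-1)^j.natAbs * X^((j*(3*j+1)/2).toNat) * qbz (2*(L:ℤ)+2) ((L:ℤ)-2*j)
    = VV L - X^(L+1) * VV L := by
  have hsplit : ∀ j : ℤ,
      (-1:Polynomial ℤ)^j.natAbs * X^((j*(3*j+1)/2).toNat) * qbz (2*(L:ℤ)+2) ((L:ℤ)-2*j)
      = (-1)^j.natAbs * X^((j*(3*j+1)/2).toNat) *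
          (X^(((L:ℤ)+2+2*j).toNat) * qbz (2*(L:ℤ)+1) ((L:ℤ)-1-2*j))
        + (-1)^j.natAbs * X^((j*(3*j+1)/2).toNat) * qbz (2*(L:ℤ)+1) ((L:ℤ)-2*j) := by
    intro j
    have hp := qbz_pascal2 (show (1:ℤ) ≤ 2*(L:ℤ)+2 by omega) ((L:ℤ)-2*j)
    rw [show (2*(L:ℤ)+2-((L:ℤ)-2*j)) = (L:ℤ)+2+2*j from by ring,
      show (2*(L:ℤ)+2-1) = 2*(L:ℤ)+1 from by ring,
      show ((L:ℤ)-2*j-1) = (L:ℤ)-1-2*j from by ring] at hp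
    rw [hp]
    ring
  rw [Finset.sum_congr rfl (fun j _ => hsplit j), Finset.sum_add_distrib]
  have hV : ∑ j ∈ Finset.Icc (-(L:ℤ)-2) ((L:ℤ)+1),
      (-1:Polynomial ℤ)^j.natAbs * X^((j*(3*j+1)/2).toNat) * qbz (2*(L:ℤ)+1) ((L:ℤ)-2*j)
      = VV L := by
    rw [VV]
    apply sum_ext
    · intro j hj hj'
      simp only [Finset.mem_Icc] at hj hj'
      rw [qbz_eq_zero (show ((L:ℤ)-2*j < 0 ∨ 2*(L:ℤ)+1 < (L:ℤ)-2*j) from by omega), mul_zero]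
    · intro j hj hj'
      simp only [Finset.mem_Icc] at hj hj'
      rw [qbz_eq_zero (show ((L:ℤ)-2*j < 0 ∨ 2*(L:ℤ)+1 < (L:ℤ)-2*j) from by omega), mul_zero]
  have hVt : VV L = ∑ j ∈ Finset.Icc (-(L:ℤ)-1) ((L:ℤ)+1),
      (-1:Polynomial ℤ)^j.natAbs * X^((j*(3*j+1)/2).toNat) * qbz (2*(L:ℤ)+1) ((L:ℤ)-2*j) :=
    Finset.sum_congr rfl (fun j _ => by rw [trm])
  have hS : ∑ j ∈ Finset.Icc (-(L:ℤ)-2) ((L:ℤ)+1),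
      (-1:Polynomial ℤ)^j.natAbs * X^((j*(3*j+1)/2).toNat) *
        (X^(((L:ℤ)+2+2*j).toNat) * qbz (2*(L:ℤ)+1) ((L:ℤ)-1-2*j))
      = - (X^(L+1) * VV L) := by
    set g : ℤ → Polynomial ℤ := fun j =>
      (-1:Polynomial ℤ)^j.natAbs * X^((j*(3*j+1)/2).toNat) *
        (X^(((L:ℤ)+2+2*j).toNat) * qbz (2*(L:ℤ)+1) ((L:ℤ)-1-2*j)) with hg
    have hrefl : ∑ j ∈ Finset.Icc (-(L:ℤ)-2) ((L:ℤ)+1), g j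
        = ∑ j ∈ Finset.Icc (-(L:ℤ)-2) ((L:ℤ)+1), g (-1 - j) :=
      sum_reflect g _ _ (-1) (by ring)
    have hpt : ∀ j : ℤ, g (-1 - j) = -(X^(L+1) * trm (2*(L:ℤ)+1) (L:ℤ) j) := by
      intro j
      rw [hg]
      simp only
      rw [sgn_flip (-1) (by decide) j, trm]
      rcases le_or_gt 0 ((L:ℤ)-2*j) with h0 | h0
      · rcases le_or_gt ((L:ℤ)-2*j) (2*(L:ℤ)+1) with h1 | h1
        · have hsym : qbz (2*(L:ℤ)+1) ((L:ℤ)-1-2*(-1-j)) = qbz (2*(L:ℤ)+1) ((L:ℤ)-2*j) := by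
            rw [qbz_symm (by omega) ((L:ℤ)-1-2*(-1-j)),
              show (2*(L:ℤ)+1 - ((L:ℤ)-1-2*(-1-j))) = (L:ℤ)-2*j from by ring]
          rw [hsym]
          have he : (((-1-j) * (3*(-1-j)+1)/2).toNat) + (((L:ℤ)+2+2*(-1-j)).toNat)
              = (L+1) + ((j*(3*j+1)/2).toNat) := by
            have := toNat_add_eq (pent_nonneg (-1-j)) (show (0:ℤ) ≤ (L:ℤ)+2+2*(-1-j) from by omega)
              (show (0:ℤ) ≤ ((L:ℤ)+1) from by omega) (pent_nonneg j)
              (by rw [pent_reflect_neg_one]; ring)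
            omega
          calc -(-1:Polynomial ℤ)^j.natAbs * X^(((-1-j)*(3*(-1-j)+1)/2).toNat) *
                (X^(((L:ℤ)+2+2*(-1-j)).toNat) * qbz (2*(L:ℤ)+1) ((L:ℤ)-2*j))
              = -((-1)^j.natAbs * (X^((((-1-j)*(3*(-1-j)+1)/2).toNat) + (((L:ℤ)+2+2*(-1-j)).toNat)) * qbz (2*(L:ℤ)+1) ((L:ℤ)-2*j))) := by
                rw [pow_add]; ring
            _ = -((-1)^j.natAbs * (X^((L+1) + ((j*(3*j+1)/2).toNat)) * qbz (2*(L:ℤ)+1) ((L:ℤ)-2*j))) := by rw [he]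
            _ = -(X^(L+1) * ((-1)^j.natAbs * X^((j*(3*j+1)/2).toNat) * qbz (2*(L:ℤ)+1) ((L:ℤ)-2*j))) := by
                rw [pow_add]; ring
        · rw [qbz_eq_zero (show ((L:ℤ)-1-2*(-1-j) < 0 ∨ 2*(L:ℤ)+1 < (L:ℤ)-1-2*(-1-j)) from by omega),
            qbz_eq_zero (Or.inr h1)]
          ring
      · rw [qbz_eq_zero (show ((L:ℤ)-1-2*(-1-j) < 0 ∨ 2*(L:ℤ)+1 < (L:ℤ)-1-2*(-1-j)) from by omega),
          qbz_eq_zero (Or.inl h0)]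
        ring
    rw [hrefl, Finset.sum_congr rfl (fun j _ => hpt j), Finset.sum_neg_distrib,
      ← Finset.mul_sum]
    have hshrink : ∑ j ∈ Finset.Icc (-(L:ℤ)-2) ((L:ℤ)+1), trm (2*(L:ℤ)+1) (L:ℤ) j
        = VV L := by
      rw [VV]
      apply sum_ext
      · intro j hj hj'
        simp only [Finset.mem_Icc] at hj hj'
        exact trm_eq_zero (by omega)
      · intro j hj hj'
        simp only [Finset.mem_Icc] at hj hj'
        exact trm_eq_zero (by omega)
    rw [hshrink]
  rw [hV, hS]
  ring

lemma BB (L : ℕ) : VV (L+1) = X^(2*L+1) * UU L + (1 - X^(L+1) + X^(2*L+2)) * VV L := by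
  have hrange1 : (-((L+1:ℕ):ℤ)-1) = -(L:ℤ)-2 := by push_cast; ring
  have hrange2 : (((L+1:ℕ):ℤ)+1) = (L:ℤ)+2 := by push_cast; ring
  have hsplit : ∀ j : ℤ, trm (2*((L+1:ℕ):ℤ)+1) ((L+1:ℕ):ℤ) j
      = (-1)^j.natAbs * X^((j*(3*j+1)/2).toNat) * qbz (2*(L:ℤ)+2) ((L:ℤ)-2*j)
        + ((-1)^j.natAbs * X^((j*(3*j+1)/2).toNat) *
            (X^(((L:ℤ)+1-2*j).toNat) * (X^(((L:ℤ)+1+2*j).toNat) * qbz (2*(L:ℤ)+1) ((L:ℤ)-2*j)))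
          + (-1)^j.natAbs * X^((j*(3*j+1)/2).toNat) *
            (X^(((L:ℤ)+1-2*j).toNat) * qbz (2*(L:ℤ)+1) ((L:ℤ)+1-2*j))) := by
    intro j
    rw [trm, show (2*((L+1:ℕ):ℤ)+1) = 2*(L:ℤ)+3 from by push_cast; ring,
      show (((L+1:ℕ):ℤ) - 2*j) = (L:ℤ)+1-2*j from by push_cast; ring]
    have hp1 := qbz_pascal1 (show (1:ℤ) ≤ 2*(L:ℤ)+3 by omega) ((L:ℤ)+1-2*j)
    rw [show (2*(L:ℤ)+3-1) = 2*(L:ℤ)+2 from by ring,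
      show ((L:ℤ)+1-2*j-1) = (L:ℤ)-2*j from by ring] at hp1
    have hp2 := qbz_pascal2 (show (1:ℤ) ≤ 2*(L:ℤ)+2 by omega) ((L:ℤ)+1-2*j)
    rw [show (2*(L:ℤ)+2-((L:ℤ)+1-2*j)) = (L:ℤ)+1+2*j from by ring,
      show (2*(L:ℤ)+2-1) = 2*(L:ℤ)+1 from by ring,
      show ((L:ℤ)+1-2*j-1) = (L:ℤ)-2*j from by ring] at hp2
    rw [hp1, hp2]
    ring
  rw [VV, hrange1, hrange2, Finset.sum_congr rfl (fun j _ => hsplit j),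
    Finset.sum_add_distrib, Finset.sum_add_distrib]
  have hW : ∑ j ∈ Finset.Icc (-(L:ℤ)-2) ((L:ℤ)+2),
      (-1:Polynomial ℤ)^j.natAbs * X^((j*(3*j+1)/2).toNat) * qbz (2*(L:ℤ)+2) ((L:ℤ)-2*j)
      = VV L - X^(L+1) * VV L := by
    rw [← WW L]
    apply sum_ext
    · intro j hj hj'
      simp only [Finset.mem_Icc] at hj hj'
      rw [qbz_eq_zero (show ((L:ℤ)-2*j < 0 ∨ 2*(L:ℤ)+2 < (L:ℤ)-2*j) from by omega), mul_zero]
    · intro j hj hj'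
      simp only [Finset.mem_Icc] at hj hj'
      rw [qbz_eq_zero (show ((L:ℤ)-2*j < 0 ∨ 2*(L:ℤ)+2 < (L:ℤ)-2*j) from by omega), mul_zero]
  have h2a : ∑ j ∈ Finset.Icc (-(L:ℤ)-2) ((L:ℤ)+2),
      (-1:Polynomial ℤ)^j.natAbs * X^((j*(3*j+1)/2).toNat) *
        (X^(((L:ℤ)+1-2*j).toNat) * (X^(((L:ℤ)+1+2*j).toNat) * qbz (2*(L:ℤ)+1) ((L:ℤ)-2*j)))
      = X^(2*L+2) * VV L := by
    have hpt : ∀ j : ℤ,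
        (-1:Polynomial ℤ)^j.natAbs * X^((j*(3*j+1)/2).toNat) *
          (X^(((L:ℤ)+1-2*j).toNat) * (X^(((L:ℤ)+1+2*j).toNat) * qbz (2*(L:ℤ)+1) ((L:ℤ)-2*j)))
        = X^(2*L+2) * trm (2*(L:ℤ)+1) (L:ℤ) j := by
      intro j
      rcases le_or_gt 0 ((L:ℤ)-2*j) with h0 | h0
      · rcases le_or_gt ((L:ℤ)-2*j) (2*(L:ℤ)+1) with h1 | h1
        · have he : (((L:ℤ)+1-2*j).toNat) + (((L:ℤ)+1+2*j).toNat) = 2*L+2 := by omega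
          rw [trm, ← he, pow_add]
          ring
        · rw [trm, qbz_eq_zero (Or.inr h1)]
          ring
      · rw [trm, qbz_eq_zero (Or.inl h0)]
        ring
    rw [Finset.sum_congr rfl (fun j _ => hpt j), ← Finset.mul_sum]
    congr 1
    rw [VV]
    apply sum_ext
    · intro j hj hj'
      simp only [Finset.mem_Icc] at hj hj'
      exact trm_eq_zero (by omega)
    · intro j hj hj'
      simp only [Finset.mem_Icc] at hj hj'
      exact trm_eq_zero (by omega)
  rw [hW, h2a, TT L]
  ring

noncomputable def GG (K M : ℕ) : Polynomial ℤ :=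
  ∑ n ∈ Finset.range (K+1), X^(n*M) * qb K n

lemma GG_zero (M : ℕ) : GG 0 M = 1 := by
  rw [GG]
  simp [qb_zero_right]

lemma RR1 (K M : ℕ) : GG (K+1) M = X^M * GG K M + GG K (M+1) := by
  rw [GG, Finset.sum_range_succ']
  have hsplit : ∀ i ∈ Finset.range (K+1),
      X^((i+1)*M) * qb (K+1) (i+1)
      = X^M * (X^(i*M) * qb K i) + X^((i+1)*(M+1)) * qb K (i+1) := by
    intro i _
    rw [qb_succ_succ, show (i+1)*M = M + i*M from by ring,
      show (i+1)*(M+1) = (M + i*M) + (i+1) from by ring, pow_add, pow_add, pow_add]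
    ring
  rw [Finset.sum_congr rfl hsplit, Finset.sum_add_distrib, ← Finset.mul_sum]
  have h2 : (∑ i ∈ Finset.range (K+1), X^((i+1)*(M+1)) * qb K (i+1))
      + X^(0*M) * qb (K+1) 0 = GG K (M+1) := by
    rw [Finset.sum_range_succ, qb_eq_zero (show K < K+1 by omega), mul_zero, add_zero,
      GG, Finset.sum_range_succ']
    simp [qb_zero_right]
  have h1 : (∑ i ∈ Finset.range (K+1), X^(i*M) * qb K i) = GG K M := by rw [GG]
  rw [add_assoc, h2, h1]

lemma RR2 (K M : ℕ) : GG (K+1) (M+1) = X^(M+K+1) * GG K M + GG K (M+1) := by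
  rw [GG, Finset.sum_range_succ']
  have hsplit : ∀ i ∈ Finset.range (K+1),
      X^((i+1)*(M+1)) * qb (K+1) (i+1)
      = X^(M+K+1) * (X^(i*M) * qb K i) + X^((i+1)*(M+1)) * qb K (i+1) := by
    intro i hi
    simp only [Finset.mem_range] at hi
    obtain ⟨d, rfl⟩ : ∃ d, K = i + d := ⟨K - i, by omega⟩
    rw [qb_pascal2 (i+d) i (by omega), show i + d - i = d from by omega]
    ring
  rw [Finset.sum_congr rfl hsplit, Finset.sum_add_distrib, ← Finset.mul_sum]
  have h2 : (∑ i ∈ Finset.range (K+1), X^((i+1)*(M+1)) * qb K (i+1))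
      + X^(0*(M+1)) * qb (K+1) 0 = GG K (M+1) := by
    rw [Finset.sum_range_succ, qb_eq_zero (show K < K+1 by omega), mul_zero, add_zero,
      GG, Finset.sum_range_succ']
    simp [qb_zero_right]
  have h1 : (∑ i ∈ Finset.range (K+1), X^(i*M) * qb K i) = GG K M := by rw [GG]
  rw [add_assoc, h2, h1]

lemma UU_zero : UU 0 = 1 := by
  rw [UU]
  have h : ∑ j ∈ Finset.Icc (-((0:ℕ):ℤ)-1) (((0:ℕ):ℤ)+1), trm (2*((0:ℕ):ℤ)) ((0:ℕ):ℤ) j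
      = ∑ j ∈ Finset.Icc (0:ℤ) 0, trm (2*((0:ℕ):ℤ)) ((0:ℕ):ℤ) j := by
    apply sum_ext
    · intro j hj hj'
      simp only [Finset.mem_Icc] at hj hj'
      exact trm_eq_zero (by push_cast at hj hj' ⊢; omega)
    · intro j hj hj'
      simp only [Finset.mem_Icc] at hj hj'
      exact trm_eq_zero (by push_cast at hj hj' ⊢; omega)
  rw [h, Finset.Icc_self, Finset.sum_singleton, trm]
  norm_num
  rw [qbz_zero_right le_rfl]

lemma VV_zero : VV 0 = 1 := by
  rw [VV]
  have h : ∑ j ∈ Finset.Icc (-((0:ℕ):ℤ)-1) (((0:ℕ):ℤ)+1), trm (2*((0:ℕ):ℤ)+1) ((0:ℕ):ℤ) j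
      = ∑ j ∈ Finset.Icc (0:ℤ) 0, trm (2*((0:ℕ):ℤ)+1) ((0:ℕ):ℤ) j := by
    apply sum_ext
    · intro j hj hj'
      simp only [Finset.mem_Icc] at hj hj'
      exact trm_eq_zero (by push_cast at hj hj' ⊢; omega)
    · intro j hj hj'
      simp only [Finset.mem_Icc] at hj hj'
      exact trm_eq_zero (by push_cast at hj hj' ⊢; omega)
  rw [h, Finset.Icc_self, Finset.sum_singleton, trm]
  norm_num
  rw [qbz_zero_right (by norm_num)]

lemma key : ∀ L : ℕ, UU L = GG L L ∧ VV L = GG L (L+1) := by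
  intro L
  induction L with
  | zero => exact ⟨UU_zero.trans (GG_zero 0).symm, VV_zero.trans (GG_zero 1).symm⟩
  | succ L ih =>
    obtain ⟨hu, hv⟩ := ih
    have r1 := RR1 L (L+1)
    have r2 := RR2 L L
    have r2' := RR2 L (L+1)
    constructor
    · rw [AA L, hu, hv]
      rw [show L + L + 1 = 2*L+1 from by ring] at r2
      linear_combination -r2
    · rw [BB L, hu, hv]
      rw [show L + L + 1 = 2*L+1 from by ring] at r2
      rw [show L + 1 + L + 1 = 2*L+2 from by ring] at r2'
      linear_combination r1 - r2 - r2'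

theorem stmt6 (L : ℕ) :
    (∑ᶠ j : ℤ, (-1 : Polynomial ℤ) ^ j.natAbs * X ^ (j * (3 * j + 1) / 2).toNat *
        qbz (2 * (L : ℤ)) ((L : ℤ) - 2 * j))
      = ∑ n ∈ Finset.range (L + 1), X ^ (n * L) * qb L n := by
  have hsupp : Function.support (fun j : ℤ => trm (2 * (L : ℤ)) (L:ℤ) j)
      ⊆ ↑(Finset.Icc (-(L:ℤ)-1) ((L:ℤ)+1)) := by
    intro j hj
    simp only [Function.mem_support] at hj
    simp only [Finset.coe_Icc, Set.mem_Icc]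
    by_contra hc
    push_neg at hc
    apply hj
    rw [trm, qbz_eq_zero (show ((L:ℤ) - 2*j < 0 ∨ 2*(L:ℤ) < (L:ℤ) - 2*j) from by omega), mul_zero]
  calc (∑ᶠ j : ℤ, (-1 : Polynomial ℤ) ^ j.natAbs * X ^ (j * (3 * j + 1) / 2).toNat *
        qbz (2 * (L : ℤ)) ((L : ℤ) - 2 * j))
      = ∑ j ∈ Finset.Icc (-(L:ℤ)-1) ((L:ℤ)+1), trm (2*(L:ℤ)) (L:ℤ) j :=
        finsum_eq_sum_of_support_subset _ hsupp
    _ = GG L L := (key L).1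
    _ = ∑ n ∈ Finset.range (L + 1), X ^ (n * L) * qb L n := by rw [GG]
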